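/- arXiv:1905.02146 — 3 statements merged into one kernel-verified Lean document; each statement's English description precedes it below -/
import Mathlib

section
/- (Lower bound in Theorem 2.1, Comparison.) For every integer ℓ ≥ 2 there exists a constant c = c(ℓ) > 0 such that for every n ≥ 1 and every connected n-dimensional product graph G of side-length ℓ, there exists a nonconstant function f : 𝔖(V) → ℝ with ℰ^IP_𝒦(f) ≥ c · ℓ^n · ℰ^IP_G(f), where 𝒦 is the complete graph on the vertex set V = {1,…,ℓ}^n of G. -/
open Finset

open scoped Classical in
noncomputable def ipForm {V : Type} [Fintype V] [DecidableEq V]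
    (G : SimpleGraph V) (f : Equiv.Perm V → ℝ) : ℝ :=
  (1 / (4 * (Nat.factorial (Fintype.card V) : ℝ))) *
    ∑ σ : Equiv.Perm V, ∑ x : V, ∑ y : V,
      (if G.Adj x y then (f (σ * Equiv.swap x y) - f σ) ^ 2 else 0)

def prodGraph {ℓ n : ℕ} (Gs : Fin n → SimpleGraph (Fin ℓ)) :
    SimpleGraph (Fin n → Fin ℓ) where
  Adj x y := ∃ i, (Gs i).Adj (x i) (y i) ∧ ∀ j, j ≠ i → x j = y j
  symm := by
    refine ⟨?_⟩
    rintro x y ⟨i, h, hj⟩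
    exact ⟨i, h.symm, fun j hj' => (hj j hj').symm⟩
  loopless := by
    refine ⟨?_⟩
    rintro x ⟨i, h, -⟩
    exact (Gs i).loopless.irrefl _ h

open scoped Classical

section IPAux

variable {V : Type} [Fintype V] [DecidableEq V]

lemma ip_fdiff (g : V → ℝ) (σ : Equiv.Perm V) (x y : V) :
    (∑ v, g v * g ((σ * Equiv.swap x y) v)) - ∑ v, g v * g (σ v)
      = (g x - g y) * (g (σ y) - g (σ x)) := by
  rcases eq_or_ne x y with rfl | hxy
  · simp
  · have h1 : (∑ v, g v * g ((σ * Equiv.swap x y) v))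
        = ∑ v, g (Equiv.swap x y v) * g (σ v) := by
      rw [← Equiv.sum_comp (Equiv.swap x y)
        (fun v => g (Equiv.swap x y v) * g (σ v))]
      refine Finset.sum_congr rfl fun v _ => ?_
      simp [Equiv.Perm.mul_apply]
    rw [h1, ← Finset.sum_sub_distrib]
    have h2 : ∀ v ∈ (univ : Finset V), v ∉ ({x, y} : Finset V) →
        g (Equiv.swap x y v) * g (σ v) - g v * g (σ v) = 0 := by
      intro v _ hv
      simp only [Finset.mem_insert, Finset.mem_singleton, not_or] at hv
      rw [Equiv.swap_apply_of_ne_of_ne hv.1 hv.2, sub_self]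
    rw [← Finset.sum_subset (Finset.subset_univ ({x, y} : Finset V)) h2,
      Finset.sum_pair hxy]
    simp only [Equiv.swap_apply_left, Equiv.swap_apply_right]
    ring

lemma ip_Dconst (g : V → ℝ) {x y x' y' : V} (hxy : x ≠ y) (hxy' : x' ≠ y') :
    ∑ σ : Equiv.Perm V, (g (σ y) - g (σ x))^2
      = ∑ σ : Equiv.Perm V, (g (σ y') - g (σ x'))^2 := by
  have h1 : Equiv.swap x x' y ≠ x' := by
    intro h
    exact hxy.symm
      (Equiv.swap x x' |>.injective ((Equiv.swap_apply_left x x').trans h.symm)).symm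
  let π : Equiv.Perm V := Equiv.swap (Equiv.swap x x' y) y' * Equiv.swap x x'
  have hπx : π x = x' := by
    simp only [π, Equiv.Perm.mul_apply, Equiv.swap_apply_left]
    exact Equiv.swap_apply_of_ne_of_ne h1.symm hxy'
  have hπy : π y = y' := by
    simp only [π, Equiv.Perm.mul_apply, Equiv.swap_apply_left]
  refine (Fintype.sum_equiv (Equiv.mulRight π)
    (fun σ => (g (σ y') - g (σ x'))^2) (fun σ => (g (σ y) - g (σ x))^2) ?_).symm
  intro σ
  simp [Equiv.Perm.mul_apply, hπx, hπy]

lemma ip_eq (g : V → ℝ) (H : SimpleGraph V) {x₀ y₀ : V} (h0 : x₀ ≠ y₀) :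
    ipForm H (fun σ => ∑ v, g v * g (σ v))
      = (1 / (4 * (Nat.factorial (Fintype.card V) : ℝ)))
        * (∑ σ : Equiv.Perm V, (g (σ y₀) - g (σ x₀))^2)
        * ∑ x : V, ∑ y : V, (if H.Adj x y then (g x - g y)^2 else 0) := by
  unfold ipForm
  rw [mul_assoc]
  congr 1
  rw [Finset.sum_comm, Finset.mul_sum]
  refine Finset.sum_congr rfl fun x _ => ?_
  rw [Finset.sum_comm, Finset.mul_sum]
  refine Finset.sum_congr rfl fun y _ => ?_
  by_cases h : H.Adj x y
  · simp only [h, if_pos]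
    have key : ∀ σ : Equiv.Perm V,
        ((∑ v, g v * g ((σ * Equiv.swap x y) v)) - ∑ v, g v * g (σ v))^2
          = (g x - g y)^2 * (g (σ y) - g (σ x))^2 := by
      intro σ
      rw [ip_fdiff g σ x y, mul_pow]
    calc ∑ σ : Equiv.Perm V,
          ((∑ v, g v * g ((σ * Equiv.swap x y) v)) - ∑ v, g v * g (σ v))^2
        = ∑ σ : Equiv.Perm V, (g x - g y)^2 * (g (σ y) - g (σ x))^2 :=
          Finset.sum_congr rfl fun σ _ => key σ
      _ = (g x - g y)^2 * ∑ σ : Equiv.Perm V, (g (σ y) - g (σ x))^2 := by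
          rw [Finset.mul_sum]
      _ = (g x - g y)^2 * ∑ σ : Equiv.Perm V, (g (σ y₀) - g (σ x₀))^2 := by
          rw [ip_Dconst g h.ne h0]
      _ = (∑ σ : Equiv.Perm V, (g (σ y₀) - g (σ x₀))^2) * (g x - g y)^2 := by
          ring
  · simp [h]

end IPAux

section Counting

lemma ip_card_rest (ℓ k : ℕ) :
    Fintype.card ({ j : Fin (k+1) // j ≠ (0 : Fin (k+1)) } → Fin ℓ) = ℓ ^ k := by
  rw [Fintype.card_fun, Fintype.card_fin]
  congr 1
  rw [Fintype.card_subtype_compl, Fintype.card_subtype_eq, Fintype.card_fin]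
  omega

lemma ip_sum_over_V (ℓ k : ℕ) (F : Fin ℓ → ℝ) :
    ∑ x : Fin (k+1) → Fin ℓ, F (x 0) = (ℓ:ℝ)^k * ∑ a : Fin ℓ, F a := by
  have h1 : ∑ x : Fin (k+1) → Fin ℓ, F (x 0)
      = ∑ p : Fin ℓ × ({ j : Fin (k+1) // j ≠ 0 } → Fin ℓ), F p.1 :=
    Fintype.sum_equiv (Equiv.funSplitAt 0 (Fin ℓ)) _ _ (fun x => rfl)
  rw [h1, Fintype.sum_prod_type]
  simp [Finset.sum_const, ip_card_rest ℓ k, mul_comm, Finset.mul_sum]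
  rw [← Finset.sum_mul]

lemma ip_sum_y (ℓ k : ℕ) (x : Fin (k+1) → Fin ℓ) (P : Fin ℓ → Prop) :
    ∑ y : Fin (k+1) → Fin ℓ,
        (if P (y 0) ∧ (∀ j, j ≠ 0 → y j = x j) then (1:ℝ) else 0)
      = ∑ b : Fin ℓ, if P b then (1:ℝ) else 0 := by
  have h1 : ∑ y : Fin (k+1) → Fin ℓ,
        (if P (y 0) ∧ (∀ j, j ≠ 0 → y j = x j) then (1:ℝ) else 0)
      = ∑ p : Fin ℓ × ({ j : Fin (k+1) // j ≠ 0 } → Fin ℓ),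
          (if P p.1 ∧ p.2 = (fun j => x j.1) then (1:ℝ) else 0) := by
    refine Fintype.sum_equiv (Equiv.funSplitAt 0 (Fin ℓ)) _ _ (fun y => ?_)
    have : (∀ j, j ≠ 0 → y j = x j) ↔
        ((fun j : { j : Fin (k+1) // j ≠ 0 } => y j.1)
          = fun j : { j : Fin (k+1) // j ≠ 0 } => x j.1) := by
      constructor
      · intro h; funext j; exact h j.1 j.2
      · intro h j hj; exact congrFun h ⟨j, hj⟩
    simp only [Equiv.funSplitAt, Equiv.piSplitAt, Equiv.coe_fn_mk]
    simp only [this]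
  rw [h1, Fintype.sum_prod_type]
  refine Finset.sum_congr rfl fun b _ => ?_
  by_cases hb : P b
  · simp [hb]
  · simp [hb]

lemma ip_ite_inst {p : Prop} {i1 i2 : Decidable p} (a b : ℝ) :
    @ite ℝ p i1 a b = @ite ℝ p i2 a b := by
  cases Subsingleton.elim i1 i2
  rfl

end Counting

set_option maxHeartbeats 1000000 in
theorem stmt1 (ℓ : ℕ) (hℓ : 2 ≤ ℓ) :
    ∃ c : ℝ, 0 < c ∧ ∀ n : ℕ, 1 ≤ n → ∀ Gs : Fin n → SimpleGraph (Fin ℓ),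
      (prodGraph Gs).Connected →
      ∃ f : Equiv.Perm (Fin n → Fin ℓ) → ℝ,
        (∃ σ τ : Equiv.Perm (Fin n → Fin ℓ), f σ ≠ f τ) ∧
        c * (ℓ : ℝ) ^ n * ipForm (prodGraph Gs) f ≤
          ipForm (⊤ : SimpleGraph (Fin n → Fin ℓ)) f := by
  have hℓ0 : (0:ℝ) < (ℓ:ℝ) := by
    have : 0 < ℓ := by omega
    exact_mod_cast this
  refine ⟨1 / (ℓ:ℝ), by positivity, ?_⟩
  intro n hn Gs _hconn
  obtain ⟨k, rfl⟩ : ∃ k, n = k + 1 := ⟨n - 1, by omega⟩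
  haveI : NeZero ℓ := ⟨by omega⟩
  set g : (Fin (k+1) → Fin ℓ) → ℝ := fun x => if x 0 = 0 then 1 else 0 with hgdef
  have h01 : (0 : Fin ℓ) ≠ 1 := by
    intro h
    have h1 : ((1 : Fin ℓ) : ℕ) = 1 % ℓ := Fin.val_one' ℓ
    have h0 : ((0 : Fin ℓ) : ℕ) = 0 := rfl
    rw [h] at h0
    have h2 : 1 % ℓ = 1 := Nat.mod_eq_of_lt (by omega)
    omega
  set x₀ : Fin (k+1) → Fin ℓ := fun _ => 0 with hx₀def
  set y₀ : Fin (k+1) → Fin ℓ := fun _ => 1 with hy₀def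
  have h0 : x₀ ≠ y₀ := fun h => h01 (congrFun h 0)
  have hgx₀ : g x₀ = 1 := if_pos rfl
  have hgy₀ : g y₀ = 0 := if_neg h01.symm
  refine ⟨fun σ => ∑ v, g v * g (σ v), ?_, ?_⟩
  · -- nonconstant
    refine ⟨Equiv.refl _, Equiv.swap x₀ y₀, ?_⟩
    have hne : (∑ v, g v * g (Equiv.refl (Fin (k+1) → Fin ℓ) v))
        - (∑ v, g v * g (Equiv.swap x₀ y₀ v)) = 1 := by
      rw [← Finset.sum_sub_distrib]
      rw [Finset.sum_eq_single x₀]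
      · simp only [Equiv.refl_apply, Equiv.swap_apply_left, hgx₀, hgy₀]
        norm_num
      · intro v _ hv
        rcases eq_or_ne v y₀ with rfl | hv2
        · simp [hgy₀]
        · rw [Equiv.swap_apply_of_ne_of_ne hv hv2]
          simp
      · intro h
        exact absurd (Finset.mem_univ _) h
    intro h
    have h' : (∑ v, g v * g (Equiv.refl (Fin (k+1) → Fin ℓ) v))
        = ∑ v, g v * g (Equiv.swap x₀ y₀ v) := h
    rw [h', sub_self] at hne
    exact one_ne_zero hne.symm
  · -- the inequality
    rw [ip_eq g (prodGraph Gs) h0, ip_eq g ⊤ h0]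
    have hgsq : ∀ x, g x * g x = g x := by
      intro x
      by_cases hx : x 0 = 0 <;> simp [hgdef, hx]
    have hs : ∑ x : Fin (k+1) → Fin ℓ, g x = (ℓ:ℝ)^k := by
      have := ip_sum_over_V ℓ k (fun a => if a = 0 then (1:ℝ) else 0)
      simp only [hgdef]
      rw [this]
      simp
    have hcard : (Fintype.card (Fin (k+1) → Fin ℓ) : ℝ) = (ℓ:ℝ)^(k+1) := by
      rw [Fintype.card_fun, Fintype.card_fin, Fintype.card_fin]
      push_cast
      ring
    -- top Dirichlet sum
    have hAtop : (∑ x : Fin (k+1) → Fin ℓ, ∑ y : Fin (k+1) → Fin ℓ,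
          (if (⊤ : SimpleGraph (Fin (k+1) → Fin ℓ)).Adj x y then (g x - g y)^2 else 0))
        = 2 * (ℓ:ℝ)^(k+1) * (ℓ:ℝ)^k - 2 * ((ℓ:ℝ)^k)^2 := by
      have h1 : ∀ x y : Fin (k+1) → Fin ℓ,
          (if (⊤ : SimpleGraph (Fin (k+1) → Fin ℓ)).Adj x y then (g x - g y)^2 else 0)
            = g x + g y - 2 * g x * g y := by
        intro x y
        rcases eq_or_ne x y with rfl | hxy
        · rw [if_neg (by simp)]
          linear_combination (2:ℝ) * hgsq x
        · rw [if_pos (by simpa using hxy)]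
          have e1 := hgsq x
          have e2 := hgsq y
          nlinarith [e1, e2]
      calc ∑ x : Fin (k+1) → Fin ℓ, ∑ y : Fin (k+1) → Fin ℓ,
            (if (⊤ : SimpleGraph (Fin (k+1) → Fin ℓ)).Adj x y then (g x - g y)^2 else 0)
          = ∑ x : Fin (k+1) → Fin ℓ, ∑ y : Fin (k+1) → Fin ℓ,
            (g x + g y - 2 * g x * g y) :=
            Finset.sum_congr rfl fun x _ => Finset.sum_congr rfl fun y _ => h1 x y
        _ = ∑ x : Fin (k+1) → Fin ℓ,
            ((Fintype.card (Fin (k+1) → Fin ℓ) : ℝ) * g x + (ℓ:ℝ)^k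
              - 2 * g x * (ℓ:ℝ)^k) := by
            refine Finset.sum_congr rfl fun x _ => ?_
            rw [Finset.sum_sub_distrib, Finset.sum_add_distrib, Finset.sum_const,
              ← Finset.mul_sum, hs, Finset.card_univ, nsmul_eq_mul]
        _ = (Fintype.card (Fin (k+1) → Fin ℓ) : ℝ) * (ℓ:ℝ)^k
              + (Fintype.card (Fin (k+1) → Fin ℓ) : ℝ) * (ℓ:ℝ)^k
              - 2 * ((ℓ:ℝ)^k * (ℓ:ℝ)^k) := by
            rw [Finset.sum_sub_distrib, Finset.sum_add_distrib, ← Finset.mul_sum, hs,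
              Finset.sum_const, Finset.card_univ, nsmul_eq_mul, ← Finset.sum_mul,
              ← Finset.mul_sum, hs]
            ring
        _ = 2 * (ℓ:ℝ)^(k+1) * (ℓ:ℝ)^k - 2 * ((ℓ:ℝ)^k)^2 := by
            rw [hcard]; ring
    -- product graph Dirichlet sum bound
    have hAG : (∑ x : Fin (k+1) → Fin ℓ, ∑ y : Fin (k+1) → Fin ℓ,
          (if (prodGraph Gs).Adj x y then (g x - g y)^2 else 0))
        ≤ 2 * ((ℓ:ℝ) - 1) * (ℓ:ℝ)^k := by
      have hpt : ∀ x y : Fin (k+1) → Fin ℓ,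
          (if (prodGraph Gs).Adj x y then (g x - g y)^2 else 0)
            ≤ (if ((x 0 = 0 ∧ y 0 ≠ 0) ∨ (x 0 ≠ 0 ∧ y 0 = 0))
                  ∧ (∀ j, j ≠ 0 → y j = x j) then (1:ℝ) else 0) := by
        intro x y
        by_cases hadj : (prodGraph Gs).Adj x y
        · rw [if_pos hadj]
          by_cases hx0 : x 0 = 0 <;> by_cases hy0 : y 0 = 0
          · simp only [hgdef, hx0, hy0, if_pos]
            split_ifs <;> norm_num
          · have hrest : ∀ j, j ≠ 0 → y j = x j := by
              obtain ⟨i, hi, hj⟩ := hadj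
              have hi0 : i = 0 := by
                by_contra hne
                exact hy0 ((hj 0 (Ne.symm hne)).symm.trans hx0)
              intro j hjne
              exact (hj j (hi0 ▸ hjne)).symm
            rw [if_pos ⟨Or.inl ⟨hx0, hy0⟩, hrest⟩]
            simp [hgdef, hx0, hy0]
          · have hrest : ∀ j, j ≠ 0 → y j = x j := by
              obtain ⟨i, hi, hj⟩ := hadj
              have hi0 : i = 0 := by
                by_contra hne
                exact hx0 ((hj 0 (Ne.symm hne)).trans hy0)
              intro j hjne
              exact (hj j (hi0 ▸ hjne)).symm
            rw [if_pos ⟨Or.inr ⟨hx0, hy0⟩, hrest⟩]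
            simp [hgdef, hx0, hy0]
          · simp only [hgdef, hx0, hy0, if_neg, if_false]
            split_ifs <;> norm_num
        · rw [if_neg hadj]
          split_ifs <;> norm_num
      have hb1 : ∑ b : Fin ℓ, (if b ≠ 0 then (1:ℝ) else 0) = (ℓ:ℝ) - 1 := by
        have : ∀ b : Fin ℓ, (if b ≠ 0 then (1:ℝ) else 0)
            = 1 - (if b = 0 then (1:ℝ) else 0) := by
          intro b; by_cases h : b = 0 <;> simp [h]
        rw [Finset.sum_congr rfl fun b _ => this b, Finset.sum_sub_distrib,
          Finset.sum_const]
        simp [Finset.card_univ]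
      calc (∑ x : Fin (k+1) → Fin ℓ, ∑ y : Fin (k+1) → Fin ℓ,
            (if (prodGraph Gs).Adj x y then (g x - g y)^2 else 0))
          ≤ ∑ x : Fin (k+1) → Fin ℓ, ∑ y : Fin (k+1) → Fin ℓ,
            (if ((x 0 = 0 ∧ y 0 ≠ 0) ∨ (x 0 ≠ 0 ∧ y 0 = 0))
                ∧ (∀ j, j ≠ 0 → y j = x j) then (1:ℝ) else 0) :=
            Finset.sum_le_sum fun x _ => Finset.sum_le_sum fun y _ => hpt x y
        _ = ∑ x : Fin (k+1) → Fin ℓ, (if x 0 = 0 then (ℓ:ℝ) - 1 else 1) := by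
            refine Finset.sum_congr rfl fun x _ => ?_
            rw [(Finset.sum_congr rfl fun y _ => ip_ite_inst 1 0).trans
              ((ip_sum_y ℓ k x (fun b => (x 0 = 0 ∧ b ≠ 0) ∨ (x 0 ≠ 0 ∧ b = 0))).trans
                (Finset.sum_congr rfl fun b _ => ip_ite_inst 1 0))]
            by_cases hx0 : x 0 = 0
            · rw [if_pos hx0, ← hb1]
              refine Finset.sum_congr rfl fun b _ => ?_
              by_cases hb : b = 0 <;> simp [hx0, hb]
            · rw [if_neg hx0]
              have : ∀ b : Fin ℓ,
                  (if (x 0 = 0 ∧ b ≠ 0) ∨ (x 0 ≠ 0 ∧ b = 0) then (1:ℝ) else 0)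
                    = if b = 0 then (1:ℝ) else 0 := by
                intro b; by_cases hb : b = 0 <;> simp [hx0, hb]
              rw [Finset.sum_congr rfl fun b _ => this b]
              simp
        _ = 2 * ((ℓ:ℝ) - 1) * (ℓ:ℝ)^k := by
            have := ip_sum_over_V ℓ k (fun a => if a = 0 then (ℓ:ℝ) - 1 else 1)
            rw [this]
            have hsum : ∑ a : Fin ℓ, (if a = 0 then (ℓ:ℝ) - 1 else 1)
                = 2 * ((ℓ:ℝ) - 1) := by
              have : ∀ a : Fin ℓ, (if a = 0 then (ℓ:ℝ) - 1 else 1)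
                  = 1 + ((ℓ:ℝ) - 2) * (if a = 0 then (1:ℝ) else 0) := by
                intro a
                by_cases h : a = 0
                · simp [h]; ring
                · simp [h]
              rw [Finset.sum_congr rfl fun a _ => this a, Finset.sum_add_distrib,
                Finset.sum_const, ← Finset.mul_sum]
              simp [Finset.card_univ]
              ring
            rw [hsum]
            ring
    -- put it all together
    have hD : 0 ≤ ∑ σ : Equiv.Perm (Fin (k+1) → Fin ℓ), (g (σ y₀) - g (σ x₀))^2 :=
      Finset.sum_nonneg fun _ _ => sq_nonneg _
    have hc0 : 0 ≤ (1 / (4 * (Nat.factorial (Fintype.card (Fin (k+1) → Fin ℓ)) : ℝ))) := by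
      positivity
    have hC : 0 ≤ (1 / (4 * (Nat.factorial (Fintype.card (Fin (k+1) → Fin ℓ)) : ℝ)))
        * ∑ σ : Equiv.Perm (Fin (k+1) → Fin ℓ), (g (σ y₀) - g (σ x₀))^2 :=
      mul_nonneg hc0 hD
    have hLk : (0:ℝ) ≤ (ℓ:ℝ)^k := by positivity
    have key : (ℓ:ℝ)^k * (∑ x : Fin (k+1) → Fin ℓ, ∑ y : Fin (k+1) → Fin ℓ,
          (if (prodGraph Gs).Adj x y then (g x - g y)^2 else 0))
        ≤ ∑ x : Fin (k+1) → Fin ℓ, ∑ y : Fin (k+1) → Fin ℓ,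
          (if (⊤ : SimpleGraph (Fin (k+1) → Fin ℓ)).Adj x y then (g x - g y)^2 else 0) := by
      rw [hAtop]
      calc (ℓ:ℝ)^k * (∑ x : Fin (k+1) → Fin ℓ, ∑ y : Fin (k+1) → Fin ℓ,
            (if (prodGraph Gs).Adj x y then (g x - g y)^2 else 0))
          ≤ (ℓ:ℝ)^k * (2 * ((ℓ:ℝ) - 1) * (ℓ:ℝ)^k) :=
            mul_le_mul_of_nonneg_left hAG hLk
        _ = 2 * (ℓ:ℝ)^(k+1) * (ℓ:ℝ)^k - 2 * ((ℓ:ℝ)^k)^2 := by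
            rw [pow_succ]; ring
    have h2 : 1 / (ℓ:ℝ) * (ℓ:ℝ)^(k+1) = (ℓ:ℝ)^k := by
      rw [pow_succ]
      field_simp
    have final : ∀ C AG AT : ℝ, 0 ≤ C → (ℓ:ℝ)^k * AG ≤ AT →
        1/(ℓ:ℝ) * (ℓ:ℝ)^(k+1) * (C * AG) ≤ C * AT := by
      intro C AG AT h1' h2'
      have h3 : 1/(ℓ:ℝ) * (ℓ:ℝ)^(k+1) * (C * AG) = C * ((ℓ:ℝ)^k * AG) := by
        rw [← h2]; ring
      rw [h3]
      exact mul_le_mul_of_nonneg_left h2' h1'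
    exact final _ _ _ hC (key.trans_eq (Finset.sum_congr rfl fun x _ =>
      Finset.sum_congr rfl fun y _ => ip_ite_inst _ _))
end

section
/- (Comparison constant of the exclusion process is dominated by that of the interchange process, inequality (2.12).) Let G = (V, E_G) be a finite simple graph, let 𝒦 be the complete graph on V, let 0 < k < |V|, and let χ ≥ 0. If ℰ^IP_𝒦(f) ≤ χ · ℰ^IP_G(f) holds for every f : 𝔖(V) → ℝ, then ℰ^EX_𝒦(g) ≤ χ · ℰ^EX_G(g) holds for every function g on the k-element subsets of V. -/
open Finset

open scoped Classical in
/-- The Dirichlet form of the `k`-particle exclusion process on `G`. -/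
noncomputable def exForm {V : Type} [Fintype V] [DecidableEq V]
    (G : SimpleGraph V) (k : ℕ) (g : Finset V → ℝ) : ℝ :=
  (1 / (2 * (Nat.choose (Fintype.card V) k : ℝ))) *
    ∑ S ∈ Finset.powersetCard k (Finset.univ : Finset V), ∑ x : V, ∑ y : V,
      if G.Adj x y ∧ x ∈ S ∧ y ∉ S then (g (symmDiff S {x, y}) - g S) ^ 2 else 0

section Aux

open scoped Classical

/-- There is a permutation carrying any finset to any other finset of the same size. -/
theorem exists_perm_image_aux {V : Type} [Fintype V] [DecidableEq V] (T T' : Finset V)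
    (h : T.card = T'.card) : ∃ π : Equiv.Perm V, T.image ⇑π = T' := by
  have hc : Fintype.card ↥T = Fintype.card ↥T' := by simpa using h
  have hc' : Fintype.card {a // ¬ a ∈ T} = Fintype.card {a // ¬ a ∈ T'} := by
    simp only [Fintype.card_subtype_compl, Fintype.card_coe, h]
  let e : ↥T ≃ ↥T' := Fintype.equivOfCardEq hc
  let e' : {a // ¬ a ∈ T} ≃ {a // ¬ a ∈ T'} := Fintype.equivOfCardEq hc'
  refine ⟨Equiv.subtypeCongr e e', ?_⟩
  apply Finset.eq_of_subset_of_card_le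
  · intro a ha
    obtain ⟨b, hb, rfl⟩ := Finset.mem_image.1 ha
    simp only [Equiv.subtypeCongr, Equiv.trans_apply, Equiv.sumCompl_symm_apply_of_pos hb,
      Equiv.sumCongr_apply, Sum.map_inl, Equiv.sumCompl_apply_inl]
    exact (e ⟨b, hb⟩).2
  · rw [Finset.card_image_of_injective _ (Equiv.injective _), h]

theorem mem_image_perm_aux {V : Type} [DecidableEq V] (S : Finset V) (π : Equiv.Perm V) (a : V) :
    a ∈ S.image ⇑π ↔ π.symm a ∈ S := by
  constructor
  · rintro h; obtain ⟨b, hb, rfl⟩ := Finset.mem_image.1 h; simpa using hb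
  · intro h; exact Finset.mem_image.2 ⟨π.symm a, h, by simp⟩

theorem image_swap_eq_aux {V : Type} [DecidableEq V] (S : Finset V) (x y : V) :
    S.image ⇑(Equiv.swap x y) =
      if (x ∈ S ↔ y ∈ S) then S else symmDiff S {x, y} := by
  ext a
  rw [mem_image_perm_aux, Equiv.symm_swap]
  by_cases hax : a = x <;> by_cases hay : a = y <;>
    split_ifs with h <;>
    simp_all [Equiv.swap_apply_def, Finset.mem_symmDiff] <;> tauto

end Aux

theorem stmt6 {V : Type} [Fintype V] [DecidableEq V] (G : SimpleGraph V)
    (k : ℕ) (hk : 0 < k) (hk' : k < Fintype.card V) (χ : ℝ) (hχ : 0 ≤ χ)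
    (hIP : ∀ f : Equiv.Perm V → ℝ, ipForm (⊤ : SimpleGraph V) f ≤ χ * ipForm G f) :
    ∀ g : Finset V → ℝ, exForm (⊤ : SimpleGraph V) k g ≤ χ * exForm G k g := by
  classical
  intro g
  -- a reference `k`-set
  obtain ⟨A, -, hA⟩ := Finset.exists_subset_card_eq (s := (Finset.univ : Finset V)) (n := k)
    (by simpa using hk'.le)
  -- the lift of `g` to permutations
  set Φ : Equiv.Perm V → Finset V := fun σ => A.image ⇑σ.symm with hΦdef
  set f : Equiv.Perm V → ℝ := fun σ => g (Φ σ) with hfdef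
  have hΦmul : ∀ σ ρ : Equiv.Perm V, Φ (σ * ρ) = (Φ σ).image ⇑ρ.symm := by
    intro σ ρ
    have hco : ⇑(σ * ρ).symm = ⇑ρ.symm ∘ ⇑σ.symm := by
      funext v; simp [Equiv.Perm.mul_apply]
      rfl
    simp only [hΦdef, hco, ← Finset.image_image]
  have hΦcard : ∀ σ : Equiv.Perm V, (Φ σ).card = k := by
    intro σ
    simp [hΦdef, Finset.card_image_of_injective _ (Equiv.injective _), hA]
  -- inner double sums
  set FF : SimpleGraph V → Finset V → ℝ := fun H S => ∑ x : V, ∑ y : V,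
      if H.Adj x y ∧ x ∈ S ∧ y ∉ S then (g (symmDiff S {x, y}) - g S) ^ 2 else 0 with hFFdef
  -- key pointwise computation
  have hinner : ∀ (H : SimpleGraph V) (σ : Equiv.Perm V),
      (∑ x : V, ∑ y : V, if H.Adj x y then (f (σ * Equiv.swap x y) - f σ) ^ 2 else 0)
        = 2 * FF H (Φ σ) := by
    intro H σ
    set S := Φ σ with hS
    have hfσ : f σ = g S := rfl
    have hterm : ∀ x y : V,
        (if H.Adj x y then (f (σ * Equiv.swap x y) - f σ) ^ 2 else 0)
          = (if H.Adj x y ∧ x ∈ S ∧ y ∉ S then (g (symmDiff S {x, y}) - g S) ^ 2 else 0)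
            + (if H.Adj x y ∧ y ∈ S ∧ x ∉ S then (g (symmDiff S {x, y}) - g S) ^ 2 else 0) := by
      intro x y
      have hf : f (σ * Equiv.swap x y)
          = g (if (x ∈ S ↔ y ∈ S) then S else symmDiff S {x, y}) := by
        show g (Φ (σ * Equiv.swap x y)) = _
        rw [hΦmul, Equiv.symm_swap, image_swap_eq_aux]
      by_cases h : H.Adj x y
      · by_cases hx : x ∈ S <;> by_cases hy : y ∈ S
        · rw [if_pos (iff_of_true hx hy)] at hf
          simp [h, hx, hy, hf, hfσ]
        · rw [if_neg (by tauto)] at hf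
          simp [h, hx, hy, hf, hfσ]
        · rw [if_neg (by tauto)] at hf
          simp [h, hx, hy, hf, hfσ]
        · rw [if_pos (iff_of_false hx hy)] at hf
          simp [h, hx, hy, hf, hfσ]
      · simp [h]
    calc (∑ x : V, ∑ y : V, if H.Adj x y then (f (σ * Equiv.swap x y) - f σ) ^ 2 else 0)
        = (∑ x : V, ∑ y : V,
            ((if H.Adj x y ∧ x ∈ S ∧ y ∉ S then (g (symmDiff S {x, y}) - g S) ^ 2 else 0)
            + (if H.Adj x y ∧ y ∈ S ∧ x ∉ S then (g (symmDiff S {x, y}) - g S) ^ 2 else 0))) := by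
          exact Finset.sum_congr rfl fun x _ => Finset.sum_congr rfl fun y _ => hterm x y
      _ = FF H S + ∑ x : V, ∑ y : V,
            (if H.Adj x y ∧ y ∈ S ∧ x ∉ S then (g (symmDiff S {x, y}) - g S) ^ 2 else 0) := by
          simp [Finset.sum_add_distrib, hFFdef]
      _ = FF H S + FF H S := by
          congr 1
          rw [Finset.sum_comm]
          refine Finset.sum_congr rfl fun x _ => Finset.sum_congr rfl fun y _ => ?_
          have h1 : (H.Adj y x ∧ x ∈ S ∧ y ∉ S) ↔ (H.Adj x y ∧ x ∈ S ∧ y ∉ S) := by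
            rw [H.adj_comm]
          have h2 : symmDiff S {y, x} = symmDiff S {x, y} := by rw [Finset.pair_comm]
          simp only [hFFdef, h2]
          exact if_congr h1 rfl rfl
      _ = 2 * FF H S := by ring
  -- fiber cardinalities are constant
  set N : ℕ := ((Finset.univ : Finset (Equiv.Perm V)).filter fun σ => Φ σ = A).card with hNdef
  have hfiber : ∀ T ∈ Finset.powersetCard k (Finset.univ : Finset V),
      ((Finset.univ : Finset (Equiv.Perm V)).filter fun σ => Φ σ = T).card = N := by
    intro T hT
    have hTcard : T.card = k := (Finset.mem_powersetCard.1 hT).2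
    obtain ⟨π, hπ⟩ := exists_perm_image_aux A T (by rw [hA, hTcard])
    rw [hNdef]
    refine Finset.card_nbij' (fun σ => σ * π) (fun σ => σ * π⁻¹) ?_ ?_ ?_ ?_
    · intro σ hσ
      simp only [Finset.mem_coe, Finset.mem_filter, Finset.mem_univ, true_and] at hσ ⊢
      rw [hΦmul, hσ, ← hπ, Finset.image_image]
      have hid : ⇑π.symm ∘ ⇑π = id := by funext v; simp
      rw [hid, Finset.image_id]
    · intro σ hσ
      simp only [Finset.mem_coe, Finset.mem_filter, Finset.mem_univ, true_and] at hσ ⊢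
      rw [hΦmul, hσ]
      have hsymm : ⇑(π⁻¹ : Equiv.Perm V).symm = ⇑π := by funext v; simp [Equiv.Perm.inv_def]
      rw [hsymm, hπ]
    · intro σ _; group
    · intro σ _; group
  have hNpos : 0 < N := by
    rw [hNdef]
    refine Finset.card_pos.2 ⟨1, ?_⟩
    simp only [Finset.mem_filter, Finset.mem_univ, true_and]
    show A.image ⇑(1 : Equiv.Perm V).symm = A
    rw [show ⇑(1 : Equiv.Perm V).symm = id from rfl, Finset.image_id]
  -- summing over fibers
  have hsum : ∀ H : SimpleGraph V, (∑ σ : Equiv.Perm V, FF H (Φ σ))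
      = (N : ℝ) * ∑ T ∈ Finset.powersetCard k (Finset.univ : Finset V), FF H T := by
    intro H
    rw [← Finset.sum_fiberwise_of_maps_to' (g := Φ)
      (fun σ _ => Finset.mem_powersetCard.2 ⟨Finset.subset_univ _, hΦcard σ⟩) (FF H)]
    rw [Finset.mul_sum]
    refine Finset.sum_congr rfl fun T hT => ?_
    rw [Finset.sum_const, hfiber T hT, nsmul_eq_mul]
  -- express both Dirichlet forms through `FF`
  have hip : ∀ H : SimpleGraph V, ipForm H f
      = (1 / (4 * (Nat.factorial (Fintype.card V) : ℝ))) * (2 * ((N : ℝ) *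
          ∑ T ∈ Finset.powersetCard k (Finset.univ : Finset V), FF H T)) := by
    intro H
    rw [ipForm]
    congr 1
    calc (∑ σ : Equiv.Perm V, ∑ x : V, ∑ y : V,
          if H.Adj x y then (f (σ * Equiv.swap x y) - f σ) ^ 2 else 0)
        = ∑ σ : Equiv.Perm V, 2 * FF H (Φ σ) :=
          Finset.sum_congr rfl fun σ _ => hinner H σ
      _ = 2 * ∑ σ : Equiv.Perm V, FF H (Φ σ) := by rw [Finset.mul_sum]
      _ = _ := by rw [hsum H]
  have hex : ∀ H : SimpleGraph V, exForm H k g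
      = (1 / (2 * (Nat.choose (Fintype.card V) k : ℝ))) *
          ∑ T ∈ Finset.powersetCard k (Finset.univ : Finset V), FF H T := by
    intro H; rw [exForm]
  -- deduce the comparison of the sums
  have hc : (0 : ℝ) < (1 / (4 * (Nat.factorial (Fintype.card V) : ℝ))) * (2 * (N : ℝ)) := by
    have h1 : (0 : ℝ) < (Nat.factorial (Fintype.card V) : ℝ) := by
      exact_mod_cast (Fintype.card V).factorial_pos
    have h2 : (0 : ℝ) < (N : ℝ) := by exact_mod_cast hNpos
    positivity
  have hkey : (∑ T ∈ Finset.powersetCard k (Finset.univ : Finset V), FF ⊤ T)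
      ≤ χ * ∑ T ∈ Finset.powersetCard k (Finset.univ : Finset V), FF G T := by
    have h := hIP f
    rw [hip ⊤, hip G] at h
    have h' : ((1 / (4 * (Nat.factorial (Fintype.card V) : ℝ))) * (2 * (N : ℝ))) *
        (∑ T ∈ Finset.powersetCard k (Finset.univ : Finset V), FF ⊤ T)
        ≤ ((1 / (4 * (Nat.factorial (Fintype.card V) : ℝ))) * (2 * (N : ℝ))) *
        (χ * ∑ T ∈ Finset.powersetCard k (Finset.univ : Finset V), FF G T) := by
      nlinarith [h]
    exact le_of_mul_le_mul_left h' hc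
  -- conclude
  rw [hex ⊤, hex G]
  have hd : (0 : ℝ) ≤ 1 / (2 * (Nat.choose (Fintype.card V) k : ℝ)) := by positivity
  calc (1 / (2 * (Nat.choose (Fintype.card V) k : ℝ))) *
        ∑ T ∈ Finset.powersetCard k (Finset.univ : Finset V), FF ⊤ T
      ≤ (1 / (2 * (Nat.choose (Fintype.card V) k : ℝ))) *
        (χ * ∑ T ∈ Finset.powersetCard k (Finset.univ : Finset V), FF G T) :=
        mul_le_mul_of_nonneg_left hkey hd
    _ = χ * ((1 / (2 * (Nat.choose (Fintype.card V) k : ℝ))) *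
        ∑ T ∈ Finset.powersetCard k (Finset.univ : Finset V), FF G T) := by ring
end

section
/- (Corollary 3.5, Random canonical paths for the interchange process.) Let G and H be two connected finite simple graphs on the same vertex set V. Suppose that for each edge f = {x,y} of H we are given a finitely supported probability distribution P_f on walks of G from x to y, and let κ := max_{e ∈ E_G} Σ_{f ∈ E_H} E_{γ∼P_f}[ |γ| · 1{γ traverses e} ], where |γ| is the length of the walk γ. Then ℰ^IP_H(F) ≤ 4κ · ℰ^IP_G(F) for every F : 𝔖(V) → ℝ. -/
open Finset

/-- A walk of `G` together with its (ordered) endpoints, whose unordered pair of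
endpoints is the pair `e`. -/
structure EdgeWalk {V : Type} (G : SimpleGraph V) (e : Sym2 V) where
  a : V
  b : V
  walk : G.Walk a b
  endpoints : s(a, b) = e

namespace IPaux

set_option linter.unusedSectionVars false

variable {V : Type} [Fintype V] [DecidableEq V]

noncomputable def sw : Sym2 V → Equiv.Perm V :=
  Sym2.lift ⟨fun x y => Equiv.swap x y, fun x y => Equiv.swap_comm x y⟩

noncomputable def Dform (F : Equiv.Perm V → ℝ) (e : Sym2 V) : ℝ :=
  ∑ σ : Equiv.Perm V, (F (σ * sw e) - F σ) ^ 2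

lemma Dform_nonneg (F : Equiv.Perm V → ℝ) (e : Sym2 V) : 0 ≤ Dform F e :=
  Finset.sum_nonneg fun _ _ => sq_nonneg _

lemma shift (g : Equiv.Perm V → ℝ) (π : Equiv.Perm V) :
    ∑ σ : Equiv.Perm V, g (σ * π) = ∑ σ : Equiv.Perm V, g σ :=
  Equiv.sum_comp (Equiv.mulRight π) g

lemma listBound (F : Equiv.Perm V → ℝ) :
    ∀ L : List (Sym2 V),
      ∑ σ : Equiv.Perm V, (F (σ * (L.map sw).prod) - F σ) ^ 2 ≤
        (L.length : ℝ) * (L.map (Dform F)).sum := by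
  intro L
  induction L with
  | nil => simp
  | cons e L' ih =>
    by_cases h0 : L' = []
    · subst h0
      simp [Dform, Dform_nonneg]
    · set Q : Equiv.Perm V := (L'.map sw).prod with hQ
      have hprod : ((e :: L').map sw).prod = sw e * Q := by simp [hQ]
      have hY : ∑ σ : Equiv.Perm V, (F (σ * sw e * Q) - F (σ * sw e)) ^ 2
          = ∑ σ : Equiv.Perm V, (F (σ * Q) - F σ) ^ 2 :=
        shift (fun τ => (F (τ * Q) - F τ) ^ 2) (sw e)
      have hYle : ∑ σ : Equiv.Perm V, (F (σ * sw e * Q) - F (σ * sw e)) ^ 2 ≤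
          (L'.length : ℝ) * (L'.map (Dform F)).sum := hY ▸ ih
      set n : ℝ := (L'.length : ℝ) with hn
      have hn1 : (1 : ℝ) ≤ n := by
        have h : 1 ≤ L'.length := List.length_pos_iff.mpr h0
        rw [hn]; exact_mod_cast h
      have key : ∀ σ : Equiv.Perm V,
          n * (F (σ * (sw e * Q)) - F σ) ^ 2 ≤
            n * (1 + n) * (F (σ * sw e) - F σ) ^ 2
              + (n + 1) * (F (σ * sw e * Q) - F (σ * sw e)) ^ 2 := by
        intro σ
        have hxy : F (σ * (sw e * Q)) - F σ =
            (F (σ * sw e) - F σ) + (F (σ * sw e * Q) - F (σ * sw e)) := by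
          rw [← mul_assoc]; ring
        set x := F (σ * sw e) - F σ
        set y := F (σ * sw e * Q) - F (σ * sw e)
        rw [hxy]
        nlinarith [sq_nonneg (n * x - y), sq_nonneg x, sq_nonneg y]
      have hsum : n * ∑ σ : Equiv.Perm V, (F (σ * (sw e * Q)) - F σ) ^ 2 ≤
          n * (1 + n) * Dform F e + (n + 1) * ((n : ℝ) * (L'.map (Dform F)).sum) := by
        calc n * ∑ σ : Equiv.Perm V, (F (σ * (sw e * Q)) - F σ) ^ 2
            = ∑ σ : Equiv.Perm V, n * (F (σ * (sw e * Q)) - F σ) ^ 2 := by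
              rw [Finset.mul_sum]
          _ ≤ ∑ σ : Equiv.Perm V, (n * (1 + n) * (F (σ * sw e) - F σ) ^ 2
              + (n + 1) * (F (σ * sw e * Q) - F (σ * sw e)) ^ 2) :=
              Finset.sum_le_sum fun σ _ => key σ
          _ = n * (1 + n) * Dform F e
              + (n + 1) * ∑ σ : Equiv.Perm V, (F (σ * sw e * Q) - F (σ * sw e)) ^ 2 := by
              rw [Finset.sum_add_distrib, ← Finset.mul_sum, ← Finset.mul_sum, Dform]
          _ ≤ _ := by
              have := hYle
              nlinarith [hn1]
      rw [hprod]
      have hnpos : 0 < n := lt_of_lt_of_le one_pos hn1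
      have goal' : ∑ σ : Equiv.Perm V, (F (σ * (sw e * Q)) - F σ) ^ 2 ≤
          (1 + n) * (Dform F e + (L'.map (Dform F)).sum) := by
        rw [← mul_le_mul_iff_right₀ hnpos]
        calc n * ∑ σ : Equiv.Perm V, (F (σ * (sw e * Q)) - F σ) ^ 2
            ≤ n * (1 + n) * Dform F e + (n + 1) * (n * (L'.map (Dform F)).sum) := hsum
          _ = n * ((1 + n) * (Dform F e + (L'.map (Dform F)).sum)) := by ring
      calc ∑ σ : Equiv.Perm V, (F (σ * (sw e * Q)) - F σ) ^ 2
          ≤ (1 + n) * (Dform F e + (L'.map (Dform F)).sum) := goal'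
        _ = ((e :: L').length : ℝ) * ((e :: L').map (Dform F)).sum := by
            have hmap : ((e :: L').map (Dform F)).sum
                = Dform F e + (L'.map (Dform F)).sum := by simp
            rw [hmap, List.length_cons, hn]
            push_cast
            ring


lemma exists_list {G : SimpleGraph V} {a b : V} (γ : G.Walk a b) (hn : γ.edges.Nodup) :
    ∃ L : List (Sym2 V), (L.map sw).prod = Equiv.swap a b ∧ L.length ≤ 2 * γ.length ∧
      (∀ e ∈ L, e ∈ γ.edges) ∧ (∀ e, L.count e ≤ 2) := by
  induction γ with
  | nil => exact ⟨[], by simp [Equiv.swap_self]; rfl, by simp, by simp, by simp⟩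
  | @cons a c b h p ih =>
    rw [SimpleGraph.Walk.edges_cons, List.nodup_cons] at hn
    obtain ⟨hne, hnd⟩ := hn
    by_cases hba : b = a
    · subst hba
      exact ⟨[], by simp [Equiv.swap_self]; rfl, by simp, by simp, by simp⟩
    by_cases hbc : b = c
    · subst hbc
      refine ⟨[s(a, b)], by simp [sw], ?_, ?_, ?_⟩
      · simp; omega
      · intro e he; simp at he; simp [he]
      · intro e; exact le_trans List.count_le_length (by simp)
    · obtain ⟨L', hprod, hlen, hmem, hcount⟩ := ih hnd
      refine ⟨s(a, c) :: L' ++ [s(a, c)], ?_, ?_, ?_, ?_⟩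
      · have key : Equiv.swap a c * Equiv.swap c b * Equiv.swap a c = Equiv.swap a b := by
          have h2 := Equiv.swap_apply_apply (Equiv.swap a c) c b
          rw [Equiv.swap_apply_right,
            Equiv.swap_apply_of_ne_of_ne (hba : b ≠ a) (hbc : b ≠ c),
            Equiv.swap_inv] at h2
          exact h2.symm
        have hsw : sw s(a, c) = Equiv.swap a c := rfl
        rw [List.map_append, List.prod_append, List.map_cons, List.prod_cons, hprod]
        simp only [List.map_cons, List.map_nil, List.prod_cons, List.prod_nil, mul_one, hsw]
        exact key
      · simp only [List.length_cons, List.length_append, List.length_cons, List.length_nil,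
          SimpleGraph.Walk.length_cons]
        omega
      · intro e he
        simp only [List.mem_cons, List.mem_append, List.mem_singleton] at he
        simp only [SimpleGraph.Walk.edges_cons, List.mem_cons]
        rcases he with (h1 | h2) | h3 | h4
        · exact Or.inl h1
        · exact Or.inr (hmem e h2)
        · exact Or.inl h3
        · exact absurd h4 List.not_mem_nil

      · intro e
        by_cases he : e = s(a, c)
        · subst he
          have h0 : L'.count s(a, c) = 0 := by
            rw [List.count_eq_zero]
            exact fun hmem' => hne (hmem _ hmem')
          simp [List.count_cons, List.count_append, h0]
        · have : (s(a, c) :: L' ++ [s(a, c)]).count e = L'.count e := by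
            simp [List.count_cons, List.count_append, he, Ne.symm he]
          rw [this]; exact hcount e

lemma pair_sum (G : SimpleGraph V) [DecidableRel G.Adj] (g : Sym2 V → ℝ) :
    ∑ x : V, ∑ y : V, (if G.Adj x y then g s(x, y) else 0)
      = 2 * ∑ e ∈ G.edgeFinset, g e := by
  classical
  have h1 : ∑ x : V, ∑ y : V, (if G.Adj x y then g s(x, y) else 0)
      = ∑ p ∈ (univ : Finset (V × V)).filter (fun p => G.Adj p.1 p.2), g s(p.1, p.2) := by
    rw [Finset.sum_filter, Fintype.sum_prod_type]
  rw [h1]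
  rw [← Finset.sum_fiberwise_of_maps_to (g := fun p : V × V => s(p.1, p.2))
    (t := G.edgeFinset) (fun p hp => by
      simp only [Finset.mem_filter] at hp
      simpa using hp.2)]
  rw [Finset.mul_sum]
  refine Finset.sum_congr rfl fun e he => ?_
  have hcongr : ∀ p ∈ ((univ : Finset (V × V)).filter (fun p => G.Adj p.1 p.2)).filter
      (fun p => s(p.1, p.2) = e), g s(p.1, p.2) = g e := fun p hp => by
    simp only [Finset.mem_filter] at hp
    rw [hp.2]
  rw [Finset.sum_congr rfl hcongr, Finset.sum_const, nsmul_eq_mul]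
  congr 1
  -- card of the fiber is 2
  induction e with
  | _ x y =>
    have hadj : G.Adj x y := by simpa using he
    have hxy : x ≠ y := hadj.ne
    have : ((univ : Finset (V × V)).filter (fun p => G.Adj p.1 p.2)).filter
        (fun p => s(p.1, p.2) = s(x, y)) = {(x, y), (y, x)} := by
      ext p
      simp only [Finset.mem_filter, Finset.mem_univ, true_and, Finset.mem_insert,
        Finset.mem_singleton, Sym2.eq_iff]
      constructor
      · rintro ⟨hadj', (⟨h1, h2⟩ | ⟨h1, h2⟩)⟩
        · left; exact Prod.ext h1 h2
        · right; exact Prod.ext h1 h2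
      · rintro (rfl | rfl)
        · exact ⟨hadj, Or.inl ⟨rfl, rfl⟩⟩
        · exact ⟨hadj.symm, Or.inr ⟨rfl, rfl⟩⟩
    rw [this, Finset.card_insert_of_notMem (by simp [hxy, Prod.ext_iff]), Finset.card_singleton]
    norm_num

open scoped Classical in
lemma key_walk (G : SimpleGraph V) [DecidableRel G.Adj] (F : Equiv.Perm V → ℝ)
    {a b : V} (γ : G.Walk a b) :
    ∑ σ : Equiv.Perm V, (F (σ * Equiv.swap a b) - F σ) ^ 2 ≤
      4 * (γ.length : ℝ) *
        ∑ e ∈ G.edgeFinset, (if e ∈ γ.edges then (1 : ℝ) else 0) * Dform F e := by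
  classical
  obtain ⟨L, hprod, hlen, hmem, hcount⟩ :=
    exists_list γ.bypass γ.bypass_isPath.isTrail.edges_nodup
  have h1 := listBound F L
  rw [hprod] at h1
  have hmem' : ∀ e ∈ L, e ∈ γ.edges := fun e he =>
    γ.edges_bypass_subset (hmem e he)
  have h2 : (L.map (Dform F)).sum ≤
      ∑ e ∈ G.edgeFinset, (if e ∈ γ.edges then (2 : ℝ) else 0) * Dform F e := by
    rw [Finset.sum_list_map_count]
    have hsub : L.toFinset ⊆ G.edgeFinset := fun e he => by
      rw [SimpleGraph.mem_edgeFinset]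
      exact γ.edges_subset_edgeSet (hmem' e (List.mem_toFinset.mp he))
    calc ∑ e ∈ L.toFinset, (L.count e) • Dform F e
        ≤ ∑ e ∈ L.toFinset, (if e ∈ γ.edges then (2 : ℝ) else 0) * Dform F e := by
          refine Finset.sum_le_sum fun e he => ?_
          have heγ : e ∈ γ.edges := hmem' e (List.mem_toFinset.mp he)
          rw [if_pos heγ, nsmul_eq_mul]
          have : (L.count e : ℝ) ≤ 2 := by exact_mod_cast hcount e
          exact mul_le_mul_of_nonneg_right this (Dform_nonneg F e)
      _ ≤ _ := by
          refine Finset.sum_le_sum_of_subset_of_nonneg hsub fun e _ _ => ?_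
          have := Dform_nonneg F e
          split_ifs <;> nlinarith
  have hL : (L.length : ℝ) ≤ 2 * (γ.length : ℝ) := by
    have : L.length ≤ 2 * γ.length := le_trans hlen (by
      have := γ.length_bypass_le
      omega)
    exact_mod_cast this
  have hS2 : (0:ℝ) ≤ ∑ e ∈ G.edgeFinset, (if e ∈ γ.edges then (2 : ℝ) else 0) * Dform F e :=
    Finset.sum_nonneg fun e _ => by
      have := Dform_nonneg F e
      split_ifs <;> nlinarith
  calc ∑ σ : Equiv.Perm V, (F (σ * Equiv.swap a b) - F σ) ^ 2
      ≤ (L.length : ℝ) * (L.map (Dform F)).sum := h1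
    _ ≤ (2 * (γ.length : ℝ)) *
        ∑ e ∈ G.edgeFinset, (if e ∈ γ.edges then (2 : ℝ) else 0) * Dform F e := by
        have hnn : (0:ℝ) ≤ (L.map (Dform F)).sum := by
          rw [Finset.sum_list_map_count]
          refine Finset.sum_nonneg fun e _ => ?_
          have := Dform_nonneg F e
          positivity
        have h2γ : (0:ℝ) ≤ 2 * (γ.length : ℝ) := by positivity
        exact mul_le_mul hL h2 hnn h2γ
    _ = 4 * (γ.length : ℝ) *
        ∑ e ∈ G.edgeFinset, (if e ∈ γ.edges then (1 : ℝ) else 0) * Dform F e := by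
        rw [Finset.mul_sum, Finset.mul_sum]
        refine Finset.sum_congr rfl fun e _ => ?_
        split_ifs <;> ring

lemma ipForm_eq (G : SimpleGraph V) [DecidableRel G.Adj] (F : Equiv.Perm V → ℝ) :
    ipForm G F = (1 / (2 * (Nat.factorial (Fintype.card V) : ℝ))) *
      ∑ e ∈ G.edgeFinset, Dform F e := by
  unfold ipForm
  trans ((1 / (4 * (Nat.factorial (Fintype.card V) : ℝ))) *
    (2 * ∑ e ∈ G.edgeFinset, Dform F e))
  · congr 1
    trans (∑ x : V, ∑ y : V, (if G.Adj x y then Dform F s(x, y) else 0))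
    · rw [Finset.sum_comm]
      refine Finset.sum_congr rfl fun x _ => ?_
      rw [Finset.sum_comm]
      refine Finset.sum_congr rfl fun y _ => ?_
      by_cases h : G.Adj x y <;> simp [h, Dform, sw]
    · exact pair_sum G (Dform F)
  · have hfac : (Nat.factorial (Fintype.card V) : ℝ) ≠ 0 := by
      exact_mod_cast (Nat.factorial_pos _).ne'
    field_simp
    ring

end IPaux

set_option linter.unusedVariables false in
open IPaux in
open scoped Classical in
theorem stmt9 {V : Type} [Fintype V] [DecidableEq V]
    (G H : SimpleGraph V) [DecidableRel G.Adj] [DecidableRel H.Adj]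
    (hG : G.Connected) (hH : H.Connected)
    (P : (e : Sym2 V) → EdgeWalk G e → ℝ)
    (hP0 : ∀ e ∈ H.edgeFinset, ∀ γ : EdgeWalk G e, 0 ≤ P e γ)
    (hPfin : ∀ e ∈ H.edgeFinset, (Function.support (P e)).Finite)
    (hP1 : ∀ e ∈ H.edgeFinset, ∑ᶠ γ : EdgeWalk G e, P e γ = 1)
    (κ : ℝ)
    (hκ : ∀ e ∈ G.edgeFinset,
      ∑ f ∈ H.edgeFinset, ∑ᶠ γ : EdgeWalk G f,
        P f γ * ((γ.walk.length : ℝ) * (if e ∈ γ.walk.edges then 1 else 0)) ≤ κ) :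
    ∀ F : Equiv.Perm V → ℝ, ipForm H F ≤ 4 * κ * ipForm G F := by
  intro F
  rw [ipForm_eq G F, ipForm_eq H F]
  have hc : (0:ℝ) ≤ 1 / (2 * (Nat.factorial (Fintype.card V) : ℝ)) := by positivity
  have main : ∑ f ∈ H.edgeFinset, Dform F f ≤ (4 * κ) * ∑ e ∈ G.edgeFinset, Dform F e := by
    -- notation for the support finsets
    have step1 : ∀ f ∈ H.edgeFinset, ∀ hf : f ∈ H.edgeFinset, Dform F f ≤
        ∑ γ ∈ (hPfin f hf).toFinset, P f γ *
          (4 * (γ.walk.length : ℝ) *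
            ∑ e ∈ G.edgeFinset, (if e ∈ γ.walk.edges then (1:ℝ) else 0) * Dform F e) := by
      intro f _ hf
      have hsum1 : ∑ γ ∈ (hPfin f hf).toFinset, P f γ = 1 := by
        rw [← hP1 f hf]
        exact (finsum_eq_sum (P f) (hPfin f hf)).symm
      calc Dform F f = (∑ γ ∈ (hPfin f hf).toFinset, P f γ) * Dform F f := by
            rw [hsum1, one_mul]
        _ = ∑ γ ∈ (hPfin f hf).toFinset, P f γ * Dform F f := by rw [Finset.sum_mul]
        _ ≤ _ := by
            refine Finset.sum_le_sum fun γ _ => ?_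
            obtain ⟨x, y, w, rfl⟩ := γ
            refine mul_le_mul_of_nonneg_left ?_ (hP0 _ hf _)
            have hswap : Dform F s(x, y) =
                ∑ σ : Equiv.Perm V, (F (σ * Equiv.swap x y) - F σ) ^ 2 := rfl
            rw [hswap]
            exact key_walk G F w
    -- rearranged per-walk bound
    have step2 : ∑ f ∈ H.edgeFinset, Dform F f ≤
        ∑ e ∈ G.edgeFinset, 4 * (∑ f ∈ H.edgeFinset.attach,
          ∑ γ ∈ (hPfin f.1 f.2).toFinset,
            P f.1 γ * ((γ.walk.length : ℝ) * (if e ∈ γ.walk.edges then 1 else 0)))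
          * Dform F e := by
      rw [← Finset.sum_attach H.edgeFinset (fun f => Dform F f)]
      calc ∑ f ∈ H.edgeFinset.attach, Dform F f.1
          ≤ ∑ f ∈ H.edgeFinset.attach, ∑ γ ∈ (hPfin f.1 f.2).toFinset, P f.1 γ *
            (4 * (γ.walk.length : ℝ) *
              ∑ e ∈ G.edgeFinset, (if e ∈ γ.walk.edges then (1:ℝ) else 0) * Dform F e) :=
            Finset.sum_le_sum fun f _ => step1 f.1 f.2 f.2
        _ = ∑ f ∈ H.edgeFinset.attach, ∑ γ ∈ (hPfin f.1 f.2).toFinset,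
              ∑ e ∈ G.edgeFinset,
                4 * (P f.1 γ * ((γ.walk.length : ℝ) * (if e ∈ γ.walk.edges then 1 else 0)))
                  * Dform F e := by
            refine Finset.sum_congr rfl fun f _ => Finset.sum_congr rfl fun γ _ => ?_
            rw [Finset.mul_sum, Finset.mul_sum]
            refine Finset.sum_congr rfl fun e _ => by ring
        _ = ∑ e ∈ G.edgeFinset, ∑ f ∈ H.edgeFinset.attach, ∑ γ ∈ (hPfin f.1 f.2).toFinset,
                4 * (P f.1 γ * ((γ.walk.length : ℝ) * (if e ∈ γ.walk.edges then 1 else 0)))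
                  * Dform F e := by
            rw [Finset.sum_comm]
            exact Finset.sum_congr rfl fun f _ => Finset.sum_comm
        _ = _ := by
            refine Finset.sum_congr rfl fun e _ => ?_
            simp only [Finset.mul_sum, Finset.sum_mul]
    refine le_trans step2 ?_
    have hκ' : ∀ e ∈ G.edgeFinset,
        ∑ f ∈ H.edgeFinset.attach, ∑ γ ∈ (hPfin f.1 f.2).toFinset,
          P f.1 γ * ((γ.walk.length : ℝ) * (if e ∈ γ.walk.edges then 1 else 0)) ≤ κ := by
      intro e he
      have := hκ e he
      rw [← Finset.sum_attach H.edgeFinset] at this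
      refine le_trans (le_of_eq (Finset.sum_congr rfl fun f _ => ?_)) this
      exact (finsum_eq_finset_sum_of_support_subset _ (fun γ hγ => by
        simp only [Set.Finite.coe_toFinset]
        exact Function.support_mul_subset_left _ _ hγ)).symm
    calc ∑ e ∈ G.edgeFinset, 4 * (∑ f ∈ H.edgeFinset.attach,
          ∑ γ ∈ (hPfin f.1 f.2).toFinset,
            P f.1 γ * ((γ.walk.length : ℝ) * (if e ∈ γ.walk.edges then 1 else 0)))
          * Dform F e
        ≤ ∑ e ∈ G.edgeFinset, 4 * κ * Dform F e := by
          refine Finset.sum_le_sum fun e he => ?_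
          refine mul_le_mul_of_nonneg_right ?_ (Dform_nonneg F e)
          have := hκ' e he
          linarith
      _ = (4 * κ) * ∑ e ∈ G.edgeFinset, Dform F e := by rw [Finset.mul_sum]
  calc (1 / (2 * (Nat.factorial (Fintype.card V) : ℝ))) * ∑ f ∈ H.edgeFinset, Dform F f
      ≤ (1 / (2 * (Nat.factorial (Fintype.card V) : ℝ))) *
        ((4 * κ) * ∑ e ∈ G.edgeFinset, Dform F e) := mul_le_mul_of_nonneg_left main hc
    _ = 4 * κ * ((1 / (2 * (Nat.factorial (Fintype.card V) : ℝ))) *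
        ∑ e ∈ G.edgeFinset, Dform F e) := by ring
end
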